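/- Let v : 2^M → ℝ≥0 be a monotone α-submodular valuation (α ≥ 1) that is ε-close to a linear valuation ℓ, and let 𝓜 be a matroid on ground set M. Let S = {s_1, …, s_k} be a basis of 𝓜 built greedily: for each j, writing S_j := {s_1,…,s_{j−1}}, the set S_j ∪ {s_j} is independent and v(s_j | S_j) ≥ v(j' | S_j) for every item j' ∉ S_j such that S_j ∪ {j'} is independent. Then for every independent set I of 𝓜, v(S) ≥ ((1−3ε)/α)·v(I). -/

import Mathlib

/-- The prefix `{s_1, …, s_{j-1}}` of a finite sequence `s : Fin k → M`. -/
def prefixSet {M : Type*} [DecidableEq M] {k : ℕ} (s : Fin k → M) (j : Fin k) :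
    Finset M :=
  (Finset.univ.filter (fun i : Fin k => i < j)).image s

/-!
Let `Q₀ ⊆ Q₁ ⊆ ⋯ ⊆ Q_k = S` be the greedy chain and `m = |I|`. Matroid exchange with `Q_{m-1}`
yields `t ∈ I` that the greedy rule could have picked at step `m - 1`; peeling off such elements
one at a time, α-submodularity bounds each marginal `v(t | (S \ I) ∪ I')` by `α` times the
greedy marginal at that step, so `v(S ∪ I) - v(S \ I) ≤ α (v S - v ∅)`. Closeness to the linear
`ℓ` turns this into `v I ≤ (1 + ε)(α + ε) v S`, and `(1 - 3ε)(1 + ε)(α + ε) ≤ α`.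
-/

open Finset

section Matroid

variable {M : Type*} [DecidableEq M] (Indep : Finset M → Prop)

theorem card_le_card_of_maximal_indep
    (hIexch : ∀ S T : Finset M, Indep S → Indep T → S.card < T.card →
      ∃ t ∈ T, t ∉ S ∧ Indep (insert t S))
    {S I : Finset M} (hS : Indep S) (hSmax : ∀ j, j ∉ S → ¬ Indep (insert j S))
    (hI : Indep I) : I.card ≤ S.card := by
  by_contra! hlt
  obtain ⟨t, -, htS, ht⟩ := hIexch S I hS hI hlt
  exact hSmax t htS ht

structure IsGreedyChain (v : Finset M → ℝ) (Q : ℕ → Finset M) (k : ℕ) : Prop where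
  mono : Monotone Q
  card_eq : ∀ n ≤ k, (Q n).card = n
  indep : ∀ n ≤ k, Indep (Q n)
  greedy : ∀ n < k, ∀ t ∉ Q n, Indep (insert t (Q n)) → v (insert t (Q n)) ≤ v (Q (n + 1))

variable {Indep}

theorem IsGreedyChain.union_sub_le_mul
    (hIdown : ∀ S T : Finset M, S ⊆ T → Indep T → Indep S)
    (hIexch : ∀ S T : Finset M, Indep S → Indep T → S.card < T.card →
      ∃ t ∈ T, t ∉ S ∧ Indep (insert t S))
    {v : Finset M → ℝ} {α : ℝ} (hα : 0 ≤ α)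
    (hsub : ∀ S T : Finset M, S ⊆ T → ∀ j : M, j ∉ T →
      α * (v (insert j S) - v S) ≥ v (insert j T) - v T)
    {Q : ℕ → Finset M} {k : ℕ} (hQ : IsGreedyChain Indep v Q k) :
    ∀ m ≤ k, ∀ I D : Finset M, I.card = m → Indep I → Disjoint D I → Q m ⊆ D ∪ I →
      v (D ∪ I) - v D ≤ α * (v (Q m) - v (Q 0)) := by
  intro m
  induction m with
  | zero =>
    intro _ I D hcard _ _ _
    simp [card_eq_zero.mp hcard]
  | succ m ih =>
    intro hm I D hcard hI hDI hQI
    obtain ⟨t, htI, htQ, htindep⟩ :=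
      hIexch (Q m) I (hQ.indep m (by omega)) hI (by rw [hQ.card_eq m (by omega), hcard]; omega)
    have hDI' : Disjoint D (I.erase t) := hDI.mono_right (erase_subset t I)
    have hQI' : Q m ⊆ D ∪ I.erase t := fun x hx => by
      have hxt : x ≠ t := ne_of_mem_of_not_mem hx htQ
      rcases mem_union.mp (hQI (hQ.mono m.le_succ hx)) with h | h
      · exact mem_union_left _ h
      · exact mem_union_right _ (mem_erase.mpr ⟨hxt, h⟩)
    have htDI' : t ∉ D ∪ I.erase t := by
      simp only [mem_union, mem_erase, ne_eq, not_true_eq_false, false_and, or_false]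
      exact disjoint_right.mp hDI htI
    have hprev := ih (by omega) (I.erase t) D (by rw [card_erase_of_mem htI, hcard]; rfl)
      (hIdown _ _ (erase_subset t I) hI) hDI' hQI'
    have hstep := hsub (Q m) (D ∪ I.erase t) hQI' t htDI'
    have hgreedy := hQ.greedy m (by omega) t htQ htindep
    have hgreedy' := mul_le_mul_of_nonneg_left (sub_le_sub_right hgreedy (v (Q m))) hα
    rw [← insert_erase htI, union_insert]
    linarith

end Matroid

section Sequence

variable {M : Type*} [DecidableEq M] {k : ℕ}

/-- Unlike `prefixSet s j`, this also makes sense for `n = k`. -/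
def seqPrefix (s : Fin k → M) (n : ℕ) : Finset M :=
  (univ.filter (fun i : Fin k => (i : ℕ) < n)).image s

variable (s : Fin k → M)

theorem prefixSet_eq_seqPrefix (j : Fin k) : prefixSet s j = seqPrefix s j := rfl

@[simp]
theorem seqPrefix_zero : seqPrefix s 0 = ∅ := by
  simp [seqPrefix]

theorem seqPrefix_of_le {n : ℕ} (hn : k ≤ n) : seqPrefix s n = univ.image s := by
  rw [seqPrefix, filter_true_of_mem fun i _ => i.isLt.trans_le hn]

theorem seqPrefix_succ {n : ℕ} (hn : n < k) :
    seqPrefix s (n + 1) = insert (s ⟨n, hn⟩) (seqPrefix s n) := by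
  rw [seqPrefix, seqPrefix, ← image_insert]
  congr 1
  ext i
  simp only [mem_filter, mem_univ, true_and, mem_insert, Fin.ext_iff]
  omega

theorem seqPrefix_mono : Monotone (seqPrefix s) := fun _ _ hmn =>
  image_subset_image (monotone_filter_right _ fun _ _ hi => hi.trans_le hmn)

theorem card_seqPrefix {s : Fin k → M} (hs : Function.Injective s) {n : ℕ} (hn : n ≤ k) :
    (seqPrefix s n).card = n := by
  rw [seqPrefix, card_image_of_injective _ hs, Fin.card_filter_val_lt, min_eq_right hn]

end Sequence

theorem isGreedyChain_seqPrefix {M : Type*} [DecidableEq M] {Indep : Finset M → Prop}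
    {v : Finset M → ℝ} (hIempty : Indep ∅) {k : ℕ} {s : Fin k → M}
    (hs : Function.Injective s)
    (hgIndep : ∀ j : Fin k, Indep (insert (s j) (prefixSet s j)))
    (hgMax : ∀ j : Fin k, ∀ j' : M, j' ∉ prefixSet s j →
      Indep (insert j' (prefixSet s j)) →
      v (insert (s j) (prefixSet s j)) - v (prefixSet s j) ≥
        v (insert j' (prefixSet s j)) - v (prefixSet s j)) :
    IsGreedyChain Indep v (seqPrefix s) k where
  mono := seqPrefix_mono s
  card_eq _ := card_seqPrefix hs
  indep n hn := by
    induction n with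
    | zero => simpa using hIempty
    | succ n _ => rw [seqPrefix_succ s hn]; exact hgIndep ⟨n, hn⟩
  greedy n hn t ht htindep := by
    have := hgMax ⟨n, hn⟩ t ht htindep
    rw [seqPrefix_succ s hn]
    simp only [prefixSet_eq_seqPrefix] at this
    linarith

theorem le_mul_of_close_to_linear {M : Type*} [DecidableEq M] {v : Finset M → ℝ} {α ε c : ℝ}
    (hα : 1 ≤ α) (hε : 0 ≤ ε) (hv : 0 ≤ v ∅) {l : M → ℝ} (hl : ∀ j, 0 ≤ l j)
    (hclose : ∀ S : Finset M, c + ∑ j ∈ S, l j ≤ v S ∧ v S ≤ (1 + ε) * (c + ∑ j ∈ S, l j))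
    {S I : Finset M} (hexch : v (S ∪ I) - v (S \ I) ≤ α * (v S - v ∅)) :
    v I ≤ (1 + ε) * (α + ε) * v S := by
  have hsplit : ∑ j ∈ S ∪ I, l j = ∑ j ∈ S \ I, l j + ∑ j ∈ I, l j := by
    rw [← sdiff_union_self_eq_union, sum_union sdiff_disjoint]
  have hsdiff : ∑ j ∈ S \ I, l j ≤ ∑ j ∈ S, l j :=
    sum_le_sum_of_subset_of_nonneg sdiff_subset fun j _ _ => hl j
  have hempty : c ≤ v ∅ := by simpa using (hclose ∅).1
  have hεS : ε * (c + ∑ j ∈ S \ I, l j) ≤ ε * v S :=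
    mul_le_mul_of_nonneg_left ((add_le_add_right hsdiff c).trans (hclose S).1) hε
  have hlinI : c + ∑ j ∈ I, l j ≤ (α + ε) * v S := by
    linarith [(hclose (S ∪ I)).1, (hclose (S \ I)).2, mul_nonneg (sub_nonneg.mpr hα) hv]
  calc v I ≤ (1 + ε) * (c + ∑ j ∈ I, l j) := (hclose I).2
    _ ≤ (1 + ε) * ((α + ε) * v S) := mul_le_mul_of_nonneg_left hlinI (by linarith)
    _ = (1 + ε) * (α + ε) * v S := by ring

theorem div_mul_le_of_le_mul {α ε x y : ℝ} (hα : 1 ≤ α) (hε : 0 ≤ ε) (hx : 0 ≤ x)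
    (hy : 0 ≤ y) (hyx : y ≤ (1 + ε) * (α + ε) * x) :
    (1 - 3 * ε) / α * y ≤ x := by
  rw [div_mul_eq_mul_div, div_le_iff₀ (by linarith)]
  rcases le_total (1 - 3 * ε) 0 with h | h
  · nlinarith
  · have hcoef : (1 - 3 * ε) * ((1 + ε) * (α + ε)) ≤ α := by
      nlinarith [mul_nonneg hε (sub_nonneg.mpr hα), mul_nonneg hε hε]
    nlinarith [mul_le_mul_of_nonneg_left hyx h]

theorem greedy_close_to_linear_general
    {M : Type*} [DecidableEq M]
    (α ε : ℝ) (hα : 1 ≤ α) (hε : 0 ≤ ε)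
    (v : Finset M → ℝ)
    (hv : ∀ S : Finset M, 0 ≤ v S)
    (hmono : ∀ S T : Finset M, S ⊆ T → v S ≤ v T)
    (hsub : ∀ S T : Finset M, S ⊆ T → ∀ j : M, j ∉ T →
      α * (v (insert j S) - v S) ≥ v (insert j T) - v T)
    (c : ℝ) (l : M → ℝ) (hl : ∀ j : M, 0 ≤ l j)
    (ℓ : Finset M → ℝ) (hℓ : ∀ S : Finset M, ℓ S = c + ∑ j ∈ S, l j)
    (hclose : ∀ S : Finset M, ℓ S ≤ v S ∧ v S ≤ (1 + ε) * ℓ S)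
    -- the matroid, given by its independent sets
    (Indep : Finset M → Prop)
    (hIempty : Indep ∅)
    (hIdown : ∀ S T : Finset M, S ⊆ T → Indep T → Indep S)
    (hIexch : ∀ S T : Finset M, Indep S → Indep T → S.card < T.card →
      ∃ t ∈ T, t ∉ S ∧ Indep (insert t S))
    -- the greedily built set S = {s_1, …, s_k}
    (k : ℕ) (s : Fin k → M) (hsinj : Function.Injective s)
    (S : Finset M) (hS : S = Finset.univ.image s)
    (hgIndep : ∀ j : Fin k, Indep (insert (s j) (prefixSet s j)))
    (hgMax : ∀ j : Fin k, ∀ j' : M, j' ∉ prefixSet s j →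
      Indep (insert j' (prefixSet s j)) →
      v (insert (s j) (prefixSet s j)) - v (prefixSet s j) ≥
        v (insert j' (prefixSet s j)) - v (prefixSet s j))
    (hSmax : ∀ j : M, j ∉ S → ¬ Indep (insert j S))
    -- any independent set I
    (I : Finset M) (hI : Indep I) :
    v S ≥ ((1 - 3 * ε) / α) * v I := by
  have hQ := isGreedyChain_seqPrefix hIempty hsinj hgIndep hgMax
  have hQS : seqPrefix s k = S := by rw [hS, seqPrefix_of_le s le_rfl]
  have hIk : I.card ≤ k := by
    simpa [← hQS, hQ.card_eq k le_rfl] using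
      card_le_card_of_maximal_indep Indep hIexch (hQS ▸ hQ.indep k le_rfl) hSmax hI
  have hQIS : seqPrefix s I.card ⊆ S := hQS ▸ seqPrefix_mono s hIk
  have hexch := hQ.union_sub_le_mul hIdown hIexch (by linarith) hsub I.card hIk I (S \ I) rfl hI
    sdiff_disjoint (by rw [sdiff_union_self_eq_union]; exact hQIS.trans subset_union_left)
  rw [sdiff_union_self_eq_union, seqPrefix_zero] at hexch
  have hexchS : v (S ∪ I) - v (S \ I) ≤ α * (v S - v ∅) :=
    hexch.trans (mul_le_mul_of_nonneg_left (by linarith [hmono _ _ hQIS]) (by linarith))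
  exact div_mul_le_of_le_mul hα hε (hv S) (hv I)
    (le_mul_of_close_to_linear hα hε (hv ∅) hl (fun T => hℓ T ▸ hclose T) hexchS)

/-- Theorem: greedy for `α`-submodular, `ε`-close-to-linear
valuations over a matroid.  Let `v` be a monotone `α`-submodular valuation
(`α ≥ 1`) that is `ε`-close to a linear valuation `ℓ`, and let `Indep` be the
independent sets of a matroid on `M`.  If `S = {s_1,…,s_k}` is a basis built
greedily (each `s_j` preserves independence and has maximum marginal value among
items preserving independence, and `S` is maximal independent), then
`v(S) ≥ ((1−3ε)/α)·v(I)` for every independent set `I`. -/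
theorem greedy_close_to_linear
    {M : Type*} [Fintype M] [DecidableEq M]
    (α ε : ℝ) (hα : 1 ≤ α) (hε : 0 ≤ ε)
    (v : Finset M → ℝ)
    (hv : ∀ S : Finset M, 0 ≤ v S)
    (hmono : ∀ S T : Finset M, S ⊆ T → v S ≤ v T)
    (hsub : ∀ S T : Finset M, S ⊆ T → ∀ j : M, j ∉ T →
      α * (v (insert j S) - v S) ≥ v (insert j T) - v T)
    (c : ℝ) (hc : 0 ≤ c) (l : M → ℝ) (hl : ∀ j : M, 0 ≤ l j)
    (ℓ : Finset M → ℝ) (hℓ : ∀ S : Finset M, ℓ S = c + ∑ j ∈ S, l j)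
    (hclose : ∀ S : Finset M, ℓ S ≤ v S ∧ v S ≤ (1 + ε) * ℓ S)
    -- the matroid, given by its independent sets
    (Indep : Finset M → Prop)
    (hIempty : Indep ∅)
    (hIdown : ∀ S T : Finset M, S ⊆ T → Indep T → Indep S)
    (hIexch : ∀ S T : Finset M, Indep S → Indep T → S.card < T.card →
      ∃ t ∈ T, t ∉ S ∧ Indep (insert t S))
    -- the greedily built set S = {s_1, …, s_k}
    (k : ℕ) (s : Fin k → M) (hsinj : Function.Injective s)
    (S : Finset M) (hS : S = Finset.univ.image s)
    (hgIndep : ∀ j : Fin k, Indep (insert (s j) (prefixSet s j)))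
    (hgMax : ∀ j : Fin k, ∀ j' : M, j' ∉ prefixSet s j →
      Indep (insert j' (prefixSet s j)) →
      v (insert (s j) (prefixSet s j)) - v (prefixSet s j) ≥
        v (insert j' (prefixSet s j)) - v (prefixSet s j))
    (hSmax : ∀ j : M, j ∉ S → ¬ Indep (insert j S))
    -- any independent set I
    (I : Finset M) (hI : Indep I) :
    v S ≥ ((1 - 3 * ε) / α) * v I :=
  greedy_close_to_linear_general α ε hα hε v hv hmono hsub c l hl ℓ hℓ hclose Indep hIempty hIdown
    hIexch k s hsinj S hS hgIndep hgMax hSmax I hI
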